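/- arXiv:1805.04995 — 9 statements merged into one kernel-verified Lean document; each statement's English description precedes it below -/
import Mathlib

section
/- Every automorphism h of the extended bicyclic semigroup C_Z is of the form h((i,j)) = (i+k, j+k) for some integer k; consequently the automorphism group Aut(C_Z) is isomorphic to the additive group of integers. -/
/-- The extended bicyclic semigroup operation on ℤ × ℤ. -/
def emul (x y : ℤ × ℤ) : ℤ × ℤ :=
  if x.2 < y.1 then (x.1 - x.2 + y.1, y.2)
  else if x.2 = y.1 then (x.1, y.2)
  else (x.1, y.2 + x.2 - y.1)

/-!
The idempotents of `C_ℤ` are the diagonal elements `(a, a)`, multiplying as `max`, so an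
automorphism restricts to an order automorphism of `ℤ`, i.e. a translation by some `k`.
An arbitrary element `p` is recovered from idempotents: `(c, c) * p = p` iff `c ≤ p.1`, and
`p * (d, d) = p` iff `d ≤ p.2`. Transporting these relations along the automorphism shows that
it shifts both coordinates by the same `k`.
-/

lemma Int.exists_eq_add_of_orderIso (e : ℤ ≃o ℤ) : ∃ k : ℤ, ∀ a, e a = a + k := by
  have succ : ∀ a, e (a + 1) = e a + 1 := fun a =>
    (Order.covBy_iff_add_one_eq.1 <|
      (apply_covBy_apply_iff e).2 (Order.covBy_iff_add_one_eq.2 rfl)).symm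
  refine ⟨e 0, fun a => ?_⟩
  induction a using Int.induction_on with
  | zero => simp
  | succ n ih => rw [succ, ih]; ring
  | pred n ih =>
    have := succ (-n - 1)
    rw [sub_add_cancel, ih] at this
    linarith

lemma emul_diag_diag (a b : ℤ) : emul (a, a) (b, b) = (max a b, max a b) := by
  simp only [emul]
  split_ifs <;> simp [Prod.ext_iff] <;> omega

lemma emul_self_eq_self_iff {p : ℤ × ℤ} : emul p p = p ↔ p.1 = p.2 := by
  obtain ⟨a, b⟩ := p
  simp only [emul]
  split_ifs <;> simp [Prod.ext_iff] <;> omega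

lemma diag_emul_eq_self_iff (c : ℤ) (p : ℤ × ℤ) : emul (c, c) p = p ↔ c ≤ p.1 := by
  obtain ⟨a, b⟩ := p
  simp only [emul]
  split_ifs <;> simp [Prod.ext_iff] <;> omega

lemma emul_diag_eq_self_iff (d : ℤ) (p : ℤ × ℤ) : emul p (d, d) = p ↔ d ≤ p.2 := by
  obtain ⟨a, b⟩ := p
  simp only [emul]
  split_ifs <;> simp [Prod.ext_iff] <;> omega

lemma emul_add_diag (k : ℤ) (x y : ℤ × ℤ) :
    emul x y + (k, k) = emul (x + (k, k)) (y + (k, k)) := by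
  obtain ⟨a, b⟩ := x
  obtain ⟨c, d⟩ := y
  simp only [emul, Prod.mk_add_mk, add_lt_add_iff_right, add_left_inj]
  split_ifs <;> simp [Prod.ext_iff] <;> omega

section Automorphism

variable {h : ℤ × ℤ → ℤ × ℤ} (hb : Function.Bijective h)
  (hm : ∀ x y, h (emul x y) = emul (h x) (h y))
include hb hm

lemma exists_orderIso_diag :
    ∃ e : ℤ ≃o ℤ, ∀ a, h (a, a) = (e a, e a) := by
  have diag : ∀ a, ∃ b, h (a, a) = (b, b) := fun a => by
    have : emul (h (a, a)) (h (a, a)) = h (a, a) := by rw [← hm, emul_diag_diag, max_self]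
    exact ⟨(h (a, a)).1, Prod.ext rfl (emul_self_eq_self_iff.1 this).symm⟩
  choose f hf using diag
  have le_iff : ∀ a b, f a ≤ f b ↔ a ≤ b := fun a b => by
    rw [← diag_emul_eq_self_iff (f a) (f b, f b), ← diag_emul_eq_self_iff a (b, b),
      ← hf, ← hf, ← hm, hb.1.eq_iff]
  have surj : Function.Surjective f := fun c => by
    obtain ⟨⟨a, b⟩, hp⟩ := hb.2 (c, c)
    have hab : a = b :=
      emul_self_eq_self_iff.1 (hb.1 (by rw [hm, hp, emul_diag_diag, max_self]))
    subst hab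
    exact ⟨a, congrArg Prod.fst ((hf a).symm.trans hp)⟩
  exact ⟨OrderIso.ofSurjective (OrderEmbedding.ofMapLEIff f le_iff) surj, hf⟩

lemma exists_eq_add_diag_of_aut :
    ∃ k : ℤ, ∀ p : ℤ × ℤ, h p = (p.1 + k, p.2 + k) := by
  obtain ⟨e, he⟩ := exists_orderIso_diag hb hm
  obtain ⟨k, hk⟩ := Int.exists_eq_add_of_orderIso e
  have diag : ∀ a, h (a, a) = (a + k, a + k) := fun a => by rw [he, hk]
  refine ⟨k, fun p => Prod.ext (eq_of_forall_le_iff fun c => ?_)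
    (eq_of_forall_le_iff fun d => ?_)⟩
  · calc c ≤ (h p).1 ↔ h (emul (c - k, c - k) p) = h p := by
          rw [hm, diag, sub_add_cancel, diag_emul_eq_self_iff]
      _ ↔ c - k ≤ p.1 := by rw [hb.1.eq_iff, diag_emul_eq_self_iff]
      _ ↔ c ≤ p.1 + k := sub_le_iff_le_add
  · calc d ≤ (h p).2 ↔ h (emul p (d - k, d - k)) = h p := by
          rw [hm, diag, sub_add_cancel, emul_diag_eq_self_iff]
      _ ↔ d - k ≤ p.2 := by rw [hb.1.eq_iff, emul_diag_eq_self_iff]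
      _ ↔ d ≤ p.2 + k := sub_le_iff_le_add

end Automorphism

theorem aut_description_and_group :
    (∀ h : ℤ × ℤ → ℤ × ℤ,
      Function.Bijective h → (∀ x y, h (emul x y) = emul (h x) (h y)) →
        ∃ k : ℤ, ∀ p : ℤ × ℤ, h p = (p.1 + k, p.2 + k)) ∧
    ∃ Φ : ℤ ≃ {h : ℤ × ℤ → ℤ × ℤ //
        Function.Bijective h ∧ ∀ x y, h (emul x y) = emul (h x) (h y)},
      ∀ k₁ k₂ : ℤ, ((Φ (k₁ + k₂)) : ℤ × ℤ → ℤ × ℤ)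
        = ((Φ k₁) : ℤ × ℤ → ℤ × ℤ) ∘ ((Φ k₂) : ℤ × ℤ → ℤ × ℤ) := by
  refine ⟨fun _ => exists_eq_add_diag_of_aut, ?_⟩
  refine ⟨{ toFun := fun k => ⟨(· + (k, k)), (Equiv.addRight _).bijective, emul_add_diag k⟩
            invFun := fun h => (h.1 0).1
            left_inv := fun k => by simp
            right_inv := fun ⟨h, hb, hm⟩ => ?_ }, fun k₁ k₂ => ?_⟩
  · obtain ⟨k, hk⟩ := exists_eq_add_diag_of_aut hb hm
    ext p <;> simp [hk]
  · funext p
    simp only [Equiv.coe_fn_mk, Function.comp_apply, Prod.mk_add_mk, add_assoc, add_comm k₂]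
end

section
/- For all integers m, n, the variant C_Z^{m,n} is a simple semigroup: for every element s of C_Z^{m,n}, the two-sided ideal generated by s is all of C_Z^{m,n}. -/
/-- The variant (sandwich) operation on ℤ × ℤ with sandwich element (m, n). -/
def vmul (m n : ℤ) (x y : ℤ × ℤ) : ℤ × ℤ := emul (emul x (m, n)) y

lemma emul_eq_max (x y : ℤ × ℤ) :
    emul x y = (x.1 - x.2 + max x.2 y.1, y.2 - y.1 + max x.2 y.1) := by
  unfold emul
  split_ifs <;> simp only [Prod.ext_iff] <;> omega

lemma emul_assoc (x y z : ℤ × ℤ) : emul (emul x y) z = emul x (emul y z) := by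
  simp only [emul_eq_max, Prod.ext_iff]
  omega

lemma emul_of_snd_eq_fst {x y : ℤ × ℤ} (h : x.2 = y.1) : emul x y = (x.1, y.2) := by
  simp only [emul_eq_max, h, max_self, Prod.ext_iff]
  omega

lemma emul_emul_eq (s t : ℤ × ℤ) : emul (emul (t.1, s.1) s) (s.2, t.2) = t := by
  rw [emul_of_snd_eq_fst (x := (t.1, s.1)) rfl, emul_of_snd_eq_fst rfl]

lemma vmul_vmul_eq (m n : ℤ) (u s v : ℤ × ℤ) :
    vmul m n (vmul m n u s) v = emul (emul u (emul (emul (m, n) s) (m, n))) v := by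
  simp only [vmul, emul_assoc]

theorem variant_simple (m n : ℤ) (s t : ℤ × ℤ) :
    ∃ u v : ℤ × ℤ, vmul m n (vmul m n u s) v = t := by
  set w := emul (emul (m, n) s) (m, n)
  exact ⟨(t.1, w.1), (w.2, t.2), by rw [vmul_vmul_eq, emul_emul_eq]⟩
end

section
/- Let m, n be integers and write e_i = (n+i, m+i) for i ∈ N_0 for the idempotents of the variant C_Z^{m,n}. Then e_i ≼ e_j (i.e., e_i *_{m,n} e_j = e_j *_{m,n} e_i = e_i) if and only if j ≤ i. Hence the idempotents of C_Z^{m,n} under the natural partial order form a chain order-isomorphic to (N_0, max). -/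
/-! Right multiplication by the sandwich element `(m, n)` sends `eᵢ = (n + i, m + i)` to the
idempotent `(n + i, n + i)` of `C_ℤ`, and multiplying this by `eⱼ` yields `e_{max i j}`. Hence
`eᵢ * eⱼ = eⱼ * eᵢ = e_{max i j}`, which equals `eᵢ` exactly when `j ≤ i`. -/

theorem emul_of_snd_le_fst {x y : ℤ × ℤ} (h : x.2 ≤ y.1) :
    emul x y = (x.1 - x.2 + y.1, y.2) := by
  unfold emul
  split_ifs with _ heq
  · rfl
  · simp [heq]
  · omega

theorem emul_of_fst_le_snd {x y : ℤ × ℤ} (h : y.1 ≤ x.2) :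
    emul x y = (x.1, y.2 + x.2 - y.1) := by
  unfold emul
  split_ifs with _ heq
  · omega
  · simp [heq]
  · rfl

theorem vmul_idempotent_eq_max (m n : ℤ) (i j : ℕ) :
    vmul m n (n + i, m + i) (n + j, m + j) = (n + (max i j : ℕ), m + (max i j : ℕ)) := by
  have hsandwich : emul (n + i, m + i) (m, n) = (n + i, n + i) := by
    rw [emul_of_fst_le_snd (by simp)]
    congr 1; ring
  rw [vmul, hsandwich]
  rcases le_total i j with hij | hji
  · rw [emul_of_snd_le_fst (by simpa using hij), max_eq_right hij]
    congr 1; ring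
  · rw [emul_of_fst_le_snd (by simpa using hji), max_eq_left hji]
    congr 1; ring

theorem variant_idempotent_order (m n : ℤ) :
    (∀ i j : ℕ,
      (vmul m n (n + i, m + i) (n + j, m + j) = (n + (i : ℤ), m + i) ∧
       vmul m n (n + j, m + j) (n + i, m + i) = (n + (i : ℤ), m + i)) ↔ j ≤ i) ∧
    (∀ i j : ℕ,
      vmul m n (n + i, m + i) (n + j, m + j)
        = (n + (max i j : ℕ), m + (max i j : ℕ))) := by
  refine ⟨fun i j => ?_, vmul_idempotent_eq_max m n⟩
  rw [vmul_idempotent_eq_max, vmul_idempotent_eq_max, max_comm j i, and_self, Prod.ext_iff]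
  simp only [add_right_inj, Nat.cast_inj, and_self, max_eq_left_iff]
end

section
/- Let m, n be integers. In the variant C_Z^{m,n}: for (a,b) with b ≥ m, the right ideal {(a,b)} ∪ (a,b)*_{m,n}C_Z^{m,n} equals {(x,y) : x ≥ a}; and for (a,b) with a ≥ n, the left ideal {(a,b)} ∪ C_Z^{m,n}*_{m,n}(a,b) equals {(x,y) : y ≥ b}. -/
lemma emul_eq (a b c d : ℤ) : emul (a, b) (c, d) = (max a (a - b + c), max d (d + b - c)) := by
  simp only [emul]
  split_ifs <;> simp only [Prod.mk.injEq] <;> constructor <;> omega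

lemma emul_of_snd_ge_fst {a b c d : ℤ} (h : c ≤ b) : emul (a, b) (c, d) = (a, d + b - c) := by
  rw [emul_eq]
  congr 1 <;> omega

lemma emul_of_snd_le_fst_s10 {a b c d : ℤ} (h : b ≤ c) : emul (a, b) (c, d) = (a - b + c, d) := by
  rw [emul_eq]
  congr 1 <;> omega

lemma range_emul_left (a k : ℤ) : Set.range (emul (a, k)) = {p | a ≤ p.1} := by
  ext ⟨x, y⟩
  refine ⟨?_, fun (hx : a ≤ x) => ⟨(k + x - a, y), ?_⟩⟩
  · rintro ⟨⟨c, d⟩, h⟩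
    show a ≤ x
    rw [emul_eq, Prod.mk.injEq] at h
    exact h.1 ▸ le_max_left _ _
  · rw [emul_of_snd_le_fst_s10 (by omega)]
    congr 1
    omega

lemma range_emul_right (k b : ℤ) : Set.range (fun z => emul z (k, b)) = {p | b ≤ p.2} := by
  ext ⟨x, y⟩
  refine ⟨?_, fun (hy : b ≤ y) => ⟨(x, k + y - b), ?_⟩⟩
  · rintro ⟨⟨c, d⟩, h : emul (c, d) (k, b) = (x, y)⟩
    show b ≤ y
    rw [emul_eq, Prod.mk.injEq] at h
    exact h.2 ▸ le_max_left b _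
  · show emul _ _ = _
    rw [emul_of_snd_ge_fst (by omega)]
    congr 1
    omega

theorem variant_principal_ideals (m n a b : ℤ) :
    (m ≤ b → {p : ℤ × ℤ | p = (a, b) ∨ ∃ z : ℤ × ℤ, vmul m n (a, b) z = p}
      = {p : ℤ × ℤ | a ≤ p.1}) ∧
    (n ≤ a → {p : ℤ × ℤ | p = (a, b) ∨ ∃ z : ℤ × ℤ, vmul m n z (a, b) = p}
      = {p : ℤ × ℤ | b ≤ p.2}) := by
  refine ⟨fun hb => ?_, fun ha => ?_⟩
  · have hvmul : vmul m n (a, b) = emul (a, n + b - m) := by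
      funext z
      rw [vmul, emul_of_snd_ge_fst hb]
    change insert (a, b) (Set.range (vmul m n (a, b))) = _
    rw [hvmul, range_emul_left]
    exact Set.insert_eq_of_mem (Set.mem_ofPred.mpr le_rfl)
  · have hvmul : (fun z => vmul m n z (a, b)) = fun z => emul z (m - n + a, b) := by
      funext z
      rw [vmul, emul_assoc, emul_of_snd_le_fst_s10 ha]
    change insert (a, b) (Set.range fun z => vmul m n z (a, b)) = _
    rw [hvmul, range_emul_right]
    exact Set.insert_eq_of_mem (Set.mem_ofPred.mpr le_rfl)
end

section
/- Let m, n be integers. Two elements (a,b), (c,d) of the variant C_Z^{m,n} are R-equivalent (generate the same principal right ideal) if and only if a = c and (b = d or (b ≥ m and d ≥ m)). -/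
/-! In the extended bicyclic monoid, `(a, b) · (c, d) = (a + (c - b)⁺, d + (b - c)⁺)`, so the right
ideal `x · S` is the half-plane `{p | x.1 ≤ p.1}`; hence `x *_{m,n} S = (x · (m, n)) · S` is the
half-plane `{p | x.1 + (m - x.2)⁺ ≤ p.1}`. This half-plane contains `x` exactly when `m ≤ x.2`,
and comparing `{x} ∪ x *_{m,n} S` with `{y} ∪ y *_{m,n} S` at the points `x` and `y` gives the
criterion. -/

theorem emul_eq_s11 (x y : ℤ × ℤ) :
    emul x y = (x.1 + max (y.1 - x.2) 0, y.2 + max (x.2 - y.1) 0) := by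
  unfold emul
  split_ifs <;> ext <;> dsimp only <;> omega

theorem exists_emul_eq_iff (x p : ℤ × ℤ) : (∃ z, emul x z = p) ↔ x.1 ≤ p.1 := by
  constructor
  · rintro ⟨z, rfl⟩
    rw [emul_eq_s11]
    omega
  · intro h
    refine ⟨(x.2 + (p.1 - x.1), p.2), ?_⟩
    rw [emul_eq_s11]
    ext <;> dsimp only <;> omega

theorem exists_vmul_eq_iff (m n : ℤ) (x p : ℤ × ℤ) :
    (∃ z, vmul m n x z = p) ↔ x.1 + max (m - x.2) 0 ≤ p.1 := by
  simp only [vmul]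
  rw [exists_emul_eq_iff, emul_eq_s11]

theorem setOf_eq_or_exists_vmul_eq (m n : ℤ) (x : ℤ × ℤ) :
    {p | p = x ∨ ∃ z, vmul m n x z = p} = insert x {p | x.1 + max (m - x.2) 0 ≤ p.1} := by
  ext p
  simp only [exists_vmul_eq_iff, Set.mem_ofPred_eq, Set.mem_insert_iff]

theorem setOf_eq_or_exists_vmul_eq_of_le (m n : ℤ) (x : ℤ × ℤ) (hx : m ≤ x.2) :
    {p | p = x ∨ ∃ z, vmul m n x z = p} = {p | x.1 ≤ p.1} := by
  rw [setOf_eq_or_exists_vmul_eq, max_eq_right (by omega), add_zero]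
  exact Set.insert_eq_of_mem (Set.mem_ofPred.mpr le_rfl)

theorem variant_R_relation (m n a b c d : ℤ) :
    ({p : ℤ × ℤ | p = (a, b) ∨ ∃ z : ℤ × ℤ, vmul m n (a, b) z = p}
      = {p : ℤ × ℤ | p = (c, d) ∨ ∃ z : ℤ × ℤ, vmul m n (c, d) z = p})
    ↔ (a = c ∧ (b = d ∨ (m ≤ b ∧ m ≤ d))) := by
  constructor
  · intro h
    have hab : (a, b) ∈ {p : ℤ × ℤ | p = (c, d) ∨ ∃ z, vmul m n (c, d) z = p} :=
      h ▸ Or.inl rfl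
    have hcd : (c, d) ∈ {p : ℤ × ℤ | p = (a, b) ∨ ∃ z, vmul m n (a, b) z = p} :=
      h ▸ Or.inl rfl
    simp only [setOf_eq_or_exists_vmul_eq, Set.mem_insert_iff, Set.mem_ofPred_eq,
      Prod.mk.injEq] at hab hcd
    omega
  · rintro ⟨rfl, rfl | ⟨hb, hd⟩⟩
    · rfl
    · rw [setOf_eq_or_exists_vmul_eq_of_le m n (a, b) hb,
        setOf_eq_or_exists_vmul_eq_of_le m n (a, d) hd]
end

section
/- Let m, n be integers. In the variant C_Z^{m,n}, the Green H-relation is trivial: (a,b) H (c,d) if and only if (a,b) = (c,d). -/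
lemma fst_le_fst_emul (x y : ℤ × ℤ) : x.1 ≤ (emul x y).1 := by
  unfold emul
  split_ifs <;> dsimp only <;> omega

lemma snd_le_snd_emul (x y : ℤ × ℤ) : y.2 ≤ (emul x y).2 := by
  unfold emul
  split_ifs <;> dsimp only <;> omega

lemma fst_le_fst_vmul (m n : ℤ) (x z : ℤ × ℤ) : x.1 ≤ (vmul m n x z).1 :=
  (fst_le_fst_emul x (m, n)).trans (fst_le_fst_emul _ z)

lemma snd_le_snd_vmul (m n : ℤ) (z x : ℤ × ℤ) : x.2 ≤ (vmul m n z x).2 :=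
  snd_le_snd_emul _ x

lemma eq_of_principal_eq {α β : Type*} [PartialOrder β] (φ : α → β) (f : α → α → α)
    (hf : ∀ x z, φ x ≤ φ (f x z)) {x y : α}
    (h : {p | p = x ∨ ∃ z, f x z = p} = {p | p = y ∨ ∃ z, f y z = p}) : φ x = φ y := by
  have le_of_mem : ∀ {x p : α}, p ∈ {p | p = x ∨ ∃ z, f x z = p} → φ x ≤ φ p := by
    rintro x p (rfl | ⟨z, rfl⟩)
    exacts [le_rfl, hf x z]
  refine le_antisymm (le_of_mem ?_) (le_of_mem ?_)
  · exact h ▸ Or.inl rfl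
  · exact h.symm ▸ Or.inl rfl

theorem variant_H_trivial (m n a b c d : ℤ) :
    (({p : ℤ × ℤ | p = (a, b) ∨ ∃ z : ℤ × ℤ, vmul m n (a, b) z = p}
        = {p : ℤ × ℤ | p = (c, d) ∨ ∃ z : ℤ × ℤ, vmul m n (c, d) z = p}) ∧
     ({p : ℤ × ℤ | p = (a, b) ∨ ∃ z : ℤ × ℤ, vmul m n z (a, b) = p}
        = {p : ℤ × ℤ | p = (c, d) ∨ ∃ z : ℤ × ℤ, vmul m n z (c, d) = p}))
    ↔ ((a, b) : ℤ × ℤ) = (c, d) := by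
  constructor
  · rintro ⟨hR, hL⟩
    exact Prod.ext (eq_of_principal_eq Prod.fst (vmul m n) (fst_le_fst_vmul m n) hR)
      (eq_of_principal_eq Prod.snd (fun x z => vmul m n z x)
        (fun x z => snd_le_snd_vmul m n z x) hL)
  · rintro h
    rw [h]
    exact ⟨rfl, rfl⟩
end

section
/- For every integer r and every positive integer p, the map (a,b) ↦ (a, b+p) is a semigroup isomorphism from the variant C_Z^{r,r} onto the variant C_Z^{r+p,r}. -/
/-!
Applying `(a, b) ↦ (a, b + p)` to the right factor `y` of `x * (m, n) * y` shifts the product in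
the same way, while adding `p` to the second coordinate of `x` and to the first coordinate of the
sandwich element leaves `x * (m, n)` unchanged, because `emul` only compares and subtracts these two
coordinates.
-/

theorem emul_add_snd_right (x : ℤ × ℤ) (c d p : ℤ) :
    emul x (c, d + p) = ((emul x (c, d)).1, (emul x (c, d)).2 + p) := by
  unfold emul
  split_ifs <;> ext <;> dsimp only; ring

theorem emul_add_snd_left_add_fst_right (a b c d p : ℤ) :
    emul (a, b + p) (c + p, d) = emul (a, b) (c, d) := by
  unfold emul
  simp only [add_lt_add_iff_right, add_left_inj]
  split_ifs <;> ext <;> dsimp only <;> ring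

theorem vmul_add_snd_right (m n : ℤ) (x : ℤ × ℤ) (c d p : ℤ) :
    vmul m n x (c, d + p) = ((vmul m n x (c, d)).1, (vmul m n x (c, d)).2 + p) :=
  emul_add_snd_right _ c d p

theorem vmul_add_fst_sandwich (m n p a b : ℤ) (y : ℤ × ℤ) :
    vmul (m + p) n (a, b + p) y = vmul m n (a, b) y := by
  rw [vmul, vmul, emul_add_snd_left_add_fst_right]

theorem variant_iso_shift_right_general (r p : ℤ) :
    Function.Bijective (fun q : ℤ × ℤ => (q.1, q.2 + p)) ∧
    ∀ x y : ℤ × ℤ,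
      (((vmul r r x y).1, (vmul r r x y).2 + p) : ℤ × ℤ)
        = vmul (r + p) r (x.1, x.2 + p) (y.1, y.2 + p) := by
  refine ⟨(Equiv.prodCongr (Equiv.refl ℤ) (Equiv.addRight p)).bijective, fun x y => ?_⟩
  rw [vmul_add_fst_sandwich, vmul_add_snd_right]

theorem variant_iso_shift_right (r p : ℤ) (hp : 0 < p) :
    Function.Bijective (fun q : ℤ × ℤ => (q.1, q.2 + p)) ∧
    ∀ x y : ℤ × ℤ,
      (((vmul r r x y).1, (vmul r r x y).2 + p) : ℤ × ℤ)
        = vmul (r + p) r (x.1, x.2 + p) (y.1, y.2 + p) :=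
  variant_iso_shift_right_general r p
end

section
/- Any two variants C_Z^{m,n} and C_Z^{s,t} of the extended bicyclic semigroup (for arbitrary integers m, n, s, t) are isomorphic as semigroups. -/
theorem emul_add_add (x y : ℤ × ℤ) (u v w : ℤ) :
    emul (x + (u, v)) (y + (v, w)) = emul x y + (u, w) := by
  obtain ⟨a, b⟩ := x
  obtain ⟨c, d⟩ := y
  simp only [emul, Prod.mk_add_mk, add_lt_add_iff_right, add_left_inj]
  split_ifs <;> ext <;> simp only [Prod.fst_add, Prod.snd_add] <;> ring

theorem vmul_add_add (m n u v : ℤ) (x y : ℤ × ℤ) :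
    vmul (m + v) (n + u) (x + (u, v)) (y + (u, v)) = vmul m n x y + (u, v) := by
  have hsandwich : ((m + v, n + u) : ℤ × ℤ) = (m, n) + (v, u) := rfl
  rw [vmul, vmul, hsandwich, emul_add_add, emul_add_add]

theorem variants_isomorphic (m n s t : ℤ) :
    ∃ f : ℤ × ℤ → ℤ × ℤ, Function.Bijective f ∧
      ∀ x y : ℤ × ℤ, f (vmul m n x y) = vmul s t (f x) (f y) := by
  refine ⟨(· + (t - n, s - m)), (Equiv.addRight _).bijective, fun x y => ?_⟩
  have h := vmul_add_add m n (t - n) (s - m) x y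
  rw [add_sub_cancel, add_sub_cancel] at h
  exact h.symm
end

section
/- In the variant C_Z^{0,0}, for every non-negative integer k and integers k' ≤ k and l: the set of solutions (x,y) of the equation (k,k) *_{0,0} (x,y) = (k,l) is exactly {(s, l+s−k) : s ≤ k, s ∈ Z}, and the set of solutions of (x,y) *_{0,0} (k,k) = (l,k) is exactly {(l+s−k, s) : s ≤ k, s ∈ Z}. -/
/-!
Multiplying by the sandwich element `(0, 0)` on the right only clamps the second coordinate
of `x` at `0` (keeping `x.1 - x.2` fixed), so for `k ≥ 0` it fixes `(k, k)` and preserves the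
condition `x.2 ≤ k`. Each equation then reduces to a product `(m, n) · y = (m, l)` or
`x · (n, m) = (l, m)`, whose solutions are the pairs on one line with the relevant coordinate
at most `n`.
-/

lemma emul_zero_zero (x : ℤ × ℤ) : emul x (0, 0) = (x.1 - min x.2 0, max x.2 0) := by
  unfold emul
  split_ifs <;> ext <;> simp only <;> omega

lemma emul_mk_eq_mk_fst_iff (m n l : ℤ) (y : ℤ × ℤ) :
    emul (m, n) y = (m, l) ↔ y.1 ≤ n ∧ y.2 = l + y.1 - n := by
  unfold emul
  split_ifs <;> simp only [Prod.mk.injEq, true_and] at * <;> omega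

lemma emul_mk_eq_mk_snd_iff (x : ℤ × ℤ) (n m l : ℤ) :
    emul x (n, m) = (l, m) ↔ x.2 ≤ n ∧ x.1 = l + x.2 - n := by
  unfold emul
  split_ifs <;> simp only [Prod.mk.injEq, and_true] at * <;> omega

theorem shift_equation_solutions (k l : ℤ) (hk : 0 ≤ k) :
    (∀ x : ℤ × ℤ, vmul 0 0 (k, k) x = (k, l) ↔
      ∃ s : ℤ, s ≤ k ∧ x = (s, l + s - k)) ∧
    (∀ x : ℤ × ℤ, vmul 0 0 x (k, k) = (l, k) ↔
      ∃ s : ℤ, s ≤ k ∧ x = (l + s - k, s)) := by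
  have hkk : emul (k, k) (0, 0) = (k, k) := by
    rw [emul_zero_zero, min_eq_right hk, max_eq_left hk, sub_zero]
  refine ⟨fun x => ?_, fun x => ?_⟩
  · rw [vmul, hkk, emul_mk_eq_mk_fst_iff]
    exact ⟨fun ⟨hx₁, hx₂⟩ => ⟨x.1, hx₁, Prod.ext rfl hx₂⟩, fun ⟨s, hs, hx⟩ => hx ▸ ⟨hs, rfl⟩⟩
  · rw [vmul, emul_mk_eq_mk_snd_iff, emul_zero_zero]
    constructor
    · rintro ⟨hx₂, hx₁⟩
      exact ⟨x.2, by omega, Prod.ext (by dsimp only at hx₁ ⊢; omega) rfl⟩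
    · rintro ⟨s, hs, rfl⟩
      dsimp only
      omega
end
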